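/- For |q|<1 and complex parameters z, ω, the two-parameter double series identity ∑_{n₁,n₂≥0} z^{n₁} ω^{n₂} q^{n₁² + 2n₁n₂ + 2n₂² + 2n₂} (-zq;q²)_{n₂} / ((q²;q²)_{n₁} (q⁴;q⁴)_{n₂}) = (-zq;q⁴)_∞ (-zq³;q⁴)_∞ (-ωq⁴;q⁴)_∞ holds. -/

import Mathlib

open scoped BigOperators
open Filter Topology

/-- Finite q-Pochhammer symbol `(a;q)_n`. -/
noncomputable def qPoch (a q : ℂ) (n : ℕ) : ℂ := ∏ j ∈ Finset.range n, (1 - a * q ^ j)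

/-- Infinite q-Pochhammer symbol `(a;q)_∞`. -/
noncomputable def qPochInf (a q : ℂ) : ℂ := ∏' j : ℕ, (1 - a * q ^ j)

lemma one_sub_ne_zero' {w : ℂ} (h : ‖w‖ < 1) : 1 - w ≠ 0 := by
  rw [sub_ne_zero]
  rintro rfl
  simp at h

lemma qPoch_ne_zero {a r : ℂ} (h : ∀ j : ℕ, ‖a * r ^ j‖ < 1) (n : ℕ) :
    qPoch a r n ≠ 0 :=
  Finset.prod_ne_zero_iff.mpr fun j _ => one_sub_ne_zero' (h j)

lemma le_norm_qPoch {a r : ℂ} {d : ℝ} (hd1 : d ≤ 1) (h : ∀ j : ℕ, ‖a * r ^ j‖ ≤ d) (n : ℕ) :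
    (1 - d) ^ n ≤ ‖qPoch a r n‖ := by
  rw [qPoch, norm_prod]
  calc (1-d)^n = ∏ _j ∈ Finset.range n, (1-d) := by
        rw [Finset.prod_const, Finset.card_range]
    _ ≤ ∏ j ∈ Finset.range n, ‖1 - a * r ^ j‖ := by
        refine Finset.prod_le_prod (fun j _ => by linarith) (fun j _ => ?_)
        have h1 := norm_sub_norm_le (1 : ℂ) (a * r ^ j)
        simp only [norm_one] at h1
        linarith [h j]

lemma norm_qPoch_le {a r : ℂ} (hr : ‖r‖ ≤ 1) (n : ℕ) :
    ‖qPoch a r n‖ ≤ (1 + ‖a‖) ^ n := by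
  rw [qPoch, norm_prod]
  calc ∏ j ∈ Finset.range n, ‖1 - a * r^j‖ ≤ ∏ _j ∈ Finset.range n, (1 + ‖a‖) := by
        refine Finset.prod_le_prod (fun _ _ => norm_nonneg _) fun j _ => ?_
        calc ‖1 - a * r^j‖ ≤ ‖(1:ℂ)‖ + ‖a * r^j‖ := norm_sub_le _ _
          _ ≤ 1 + ‖a‖ := by
              rw [norm_one, norm_mul, norm_pow]
              have h1 : ‖r‖^j ≤ 1 := pow_le_one₀ (norm_nonneg _) hr
              nlinarith [norm_nonneg a]
    _ = (1 + ‖a‖)^n := by rw [Finset.prod_const, Finset.card_range]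

lemma multipliable_aux {a r : ℂ} (hr : ‖r‖ < 1) :
    Multipliable fun j : ℕ => 1 - a * r ^ j := by
  by_cases hz : ∃ j₀ : ℕ, 1 - a * r ^ j₀ = 0
  · obtain ⟨j₀, hj₀⟩ := hz
    refine ⟨0, ?_⟩
    rw [HasProd]
    have hev : ∀ᶠ s : Finset ℕ in atTop, (∏ j ∈ s, (1 - a * r ^ j)) = 0 := by
      filter_upwards [Filter.eventually_ge_atTop ({j₀} : Finset ℕ)] with s hs
      exact Finset.prod_eq_zero (hs (Finset.mem_singleton_self j₀)) hj₀
    exact Tendsto.congr' (hev.mono fun s hs => hs.symm) tendsto_const_nhds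
  · push_neg at hz
    have hlog : Summable fun j : ℕ => Complex.log (1 - a * r ^ j) := by
      have ht : Tendsto (fun j : ℕ => ‖a‖ * ‖r‖ ^ j) atTop (𝓝 0) := by
        simpa using (tendsto_pow_atTop_nhds_zero_of_lt_one (norm_nonneg r) hr).const_mul ‖a‖
      refine Summable.of_norm_bounded_eventually_nat (g := fun j => 2 * (‖a‖ * ‖r‖ ^ j))
        (((summable_geometric_of_lt_one (norm_nonneg r) hr).mul_left ‖a‖).mul_left 2) ?_
      filter_upwards [ht.eventually_lt_const (by norm_num : (0:ℝ) < 1/2)] with j hj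
      have hw : ‖-(a * r ^ j)‖ = ‖a‖ * ‖r‖ ^ j := by rw [norm_neg, norm_mul, norm_pow]
      have hw2 : ‖-(a * r ^ j)‖ < 1/2 := by rw [hw]; exact hj
      have hb := Complex.norm_log_one_add_le (lt_trans hw2 (by norm_num))
      have heq : (1 : ℂ) + -(a * r ^ j) = 1 - a * r ^ j := by ring
      rw [heq] at hb
      set t := ‖-(a * r ^ j)‖ with hts
      have ht0 : 0 ≤ t := norm_nonneg _
      have hinv : (1 - t)⁻¹ ≤ 2 := by
        rw [inv_le_comm₀ (by linarith) (by norm_num)]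
        linarith
      have : t ^ 2 * (1 - t)⁻¹ / 2 + t ≤ 2 * t := by nlinarith [inv_nonneg.mpr (by linarith : (0:ℝ) ≤ 1 - t)]
      rw [← hw]
      linarith
    exact Complex.multipliable_of_summable_log hlog

lemma choose_two_succ (n : ℕ) : (n+1).choose 2 = n.choose 2 + n := by
  simp [Nat.choose_succ_succ, Nat.choose_one_right]; omega

lemma sq_eq_choose (n : ℕ) : n^2 = 2 * n.choose 2 + n := by
  induction n with
  | zero => rfl
  | succ n ih =>
      have h := choose_two_succ n
      have h2 : (n+1)^2 = n^2 + 2*n + 1 := by ring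
      omega

noncomputable def eulerTerm (Q x : ℂ) (n : ℕ) : ℂ := x ^ n * Q ^ (n.choose 2) / qPoch Q Q n

lemma qPochQQ_ne_zero {Q : ℂ} (hQ : ‖Q‖ < 1) (n : ℕ) : qPoch Q Q n ≠ 0 := by
  refine qPoch_ne_zero (fun j => ?_) n
  rw [norm_mul, norm_pow]
  calc ‖Q‖ * ‖Q‖ ^ j ≤ ‖Q‖ * 1 :=
        mul_le_mul_of_nonneg_left (pow_le_one₀ (norm_nonneg _) hQ.le) (norm_nonneg _)
    _ < 1 := by rw [mul_one]; exact hQ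

lemma norm_QQ_le {Q : ℂ} (hQ : ‖Q‖ < 1) (j : ℕ) : ‖Q * Q ^ j‖ ≤ ‖Q‖ := by
  rw [norm_mul, norm_pow]
  calc ‖Q‖ * ‖Q‖ ^ j ≤ ‖Q‖ * 1 :=
        mul_le_mul_of_nonneg_left (pow_le_one₀ (norm_nonneg _) hQ.le) (norm_nonneg _)
    _ = ‖Q‖ := mul_one _

lemma one_sub_norm_le {Q : ℂ} (hQ : ‖Q‖ < 1) (n : ℕ) : 1 - ‖Q‖ ≤ ‖1 - Q * Q ^ n‖ := by
  have h1 := norm_sub_norm_le (1 : ℂ) (Q * Q ^ n)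
  simp only [norm_one] at h1
  linarith [norm_QQ_le hQ n]

lemma eulerTerm_succ {Q : ℂ} (hQ : ‖Q‖ < 1) (x : ℂ) (n : ℕ) :
    eulerTerm Q x (n+1) = eulerTerm Q x n * (x * Q ^ n / (1 - Q * Q ^ n)) := by
  have h1 : qPoch Q Q (n+1) = qPoch Q Q n * (1 - Q * Q ^ n) := Finset.prod_range_succ _ _
  have hp := qPochQQ_ne_zero hQ n
  have hd : (1 : ℂ) - Q * Q ^ n ≠ 0 := one_sub_ne_zero' (lt_of_le_of_lt (norm_QQ_le hQ n) hQ)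
  rw [eulerTerm, eulerTerm, h1, choose_two_succ, pow_add, pow_succ]
  field_simp
  ring

lemma summable_eulerTerm {Q : ℂ} (hQ : ‖Q‖ < 1) (x : ℂ) : Summable (eulerTerm Q x) := by
  refine summable_of_ratio_norm_eventually_le (r := 1/2) (by norm_num) ?_
  have ht : Tendsto (fun n : ℕ => ‖x‖ * ‖Q‖ ^ n) atTop (𝓝 0) := by
    simpa using (tendsto_pow_atTop_nhds_zero_of_lt_one (norm_nonneg Q) hQ).const_mul ‖x‖
  filter_upwards [ht.eventually_lt_const (by linarith : (0:ℝ) < (1 - ‖Q‖)/2)] with n hn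
  rw [eulerTerm_succ hQ x n, norm_mul, norm_div, norm_mul, norm_pow]
  have hden := one_sub_norm_le hQ n
  have hden0 : (0:ℝ) < 1 - ‖Q‖ := by linarith
  have h3 : ‖x‖ * ‖Q‖ ^ n / ‖1 - Q * Q ^ n‖ ≤ 1/2 := by
    rw [div_le_iff₀ (lt_of_lt_of_le hden0 hden)]
    nlinarith
  calc ‖eulerTerm Q x n‖ * (‖x‖ * ‖Q‖ ^ n / ‖1 - Q * Q ^ n‖)
      ≤ ‖eulerTerm Q x n‖ * (1/2) := mul_le_mul_of_nonneg_left h3 (norm_nonneg _)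
    _ = 1/2 * ‖eulerTerm Q x n‖ := mul_comm _ _

lemma eulerTerm_zero (Q x : ℂ) : eulerTerm Q x 0 = 1 := by
  simp [eulerTerm, qPoch]

lemma eulerF_funceq {Q : ℂ} (hQ : ‖Q‖ < 1) (x : ℂ) :
    ∑' n, eulerTerm Q x n = (1 + x) * ∑' n, eulerTerm Q (Q * x) n := by
  have hx := summable_eulerTerm hQ x
  have hqx := summable_eulerTerm hQ (Q * x)
  have key : ∑' n, (eulerTerm Q x n - eulerTerm Q (Q*x) n) = x * ∑' n, eulerTerm Q (Q*x) n := by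
    have hsub : Summable (fun n => eulerTerm Q x n - eulerTerm Q (Q*x) n) := hx.sub hqx
    rw [Summable.tsum_eq_zero_add hsub]
    have h0 : eulerTerm Q x 0 - eulerTerm Q (Q*x) 0 = 0 := by
      rw [eulerTerm_zero, eulerTerm_zero, sub_self]
    rw [h0, zero_add, ← tsum_mul_left]
    refine tsum_congr fun n => ?_
    have h1 : qPoch Q Q (n+1) = qPoch Q Q n * (1 - Q * Q ^ n) := Finset.prod_range_succ _ _
    have hp := qPochQQ_ne_zero hQ n
    have hd : (1 : ℂ) - Q * Q ^ n ≠ 0 := one_sub_ne_zero' (lt_of_le_of_lt (norm_QQ_le hQ n) hQ)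
    rw [eulerTerm, eulerTerm, eulerTerm, h1, choose_two_succ, pow_add]
    field_simp
    ring
  have hts := Summable.tsum_sub hx hqx
  rw [hts] at key
  linear_combination key + Summable.tsum_sub hx hqx - hts

lemma eulerF_iterate {Q : ℂ} (hQ : ‖Q‖ < 1) (x : ℂ) (N : ℕ) :
    ∑' n, eulerTerm Q x n
      = (∏ j ∈ Finset.range N, (1 - (-x) * Q ^ j)) * ∑' n, eulerTerm Q (Q ^ N * x) n := by
  induction N with
  | zero => simp
  | succ N ih =>
    rw [ih, eulerF_funceq hQ (Q ^ N * x), Finset.prod_range_succ,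
      show Q * (Q ^ N * x) = Q ^ (N+1) * x by ring]
    ring

lemma eulerF_dist_one {Q : ℂ} (hQ : ‖Q‖ < 1) (y : ℂ) (hy : ‖y‖ ≤ (1 - ‖Q‖)/2) :
    ‖(∑' n, eulerTerm Q y n) - 1‖ ≤ ‖y‖ * (2 / (1 - ‖Q‖)) := by
  have hQ0 : (0:ℝ) < 1 - ‖Q‖ := by linarith
  have hsum := summable_eulerTerm hQ y
  have hsum1 : Summable (fun n => eulerTerm Q y (n+1)) := (summable_nat_add_iff 1).mpr hsum
  set c : ℝ := ‖y‖ / (1 - ‖Q‖) with hc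
  have hc0 : 0 ≤ c := div_nonneg (norm_nonneg _) hQ0.le
  have hc2 : c ≤ 1/2 := by
    rw [hc, div_le_iff₀ hQ0]
    linarith
  have hbound : ∀ n : ℕ, ‖eulerTerm Q y (n+1)‖ ≤ c * (1/2)^n := by
    intro n
    have hp : (1 - ‖Q‖) ^ (n+1) ≤ ‖qPoch Q Q (n+1)‖ :=
      le_norm_qPoch hQ.le (norm_QQ_le hQ) (n+1)
    have hnum : ‖y ^ (n+1) * Q ^ ((n+1).choose 2)‖ ≤ ‖y‖^(n+1) := by
      rw [norm_mul, norm_pow, norm_pow]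
      calc ‖y‖^(n+1) * ‖Q‖^((n+1).choose 2) ≤ ‖y‖^(n+1) * 1 :=
            mul_le_mul_of_nonneg_left (pow_le_one₀ (norm_nonneg _) hQ.le) (by positivity)
        _ = ‖y‖^(n+1) := mul_one _
    have h1 : ‖eulerTerm Q y (n+1)‖ ≤ ‖y‖^(n+1) / (1 - ‖Q‖)^(n+1) := by
      rw [eulerTerm, norm_div]
      exact div_le_div₀ (by positivity) hnum (by positivity) hp
    have h2 : ‖y‖^(n+1) / (1 - ‖Q‖)^(n+1) = c^(n+1) := by
      rw [hc, div_pow]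
    have h3 : c^(n+1) ≤ c * (1/2)^n := by
      rw [pow_succ']
      exact mul_le_mul_of_nonneg_left (pow_le_pow_left₀ hc0 hc2 n) hc0
    linarith
  have hsb : Summable (fun n : ℕ => c * (1/2:ℝ)^n) :=
    (summable_geometric_of_lt_one (by norm_num) (by norm_num)).mul_left c
  have hsn : Summable (fun n => ‖eulerTerm Q y (n+1)‖) :=
    Summable.of_nonneg_of_le (fun n => norm_nonneg _) hbound hsb
  have heq : (∑' n, eulerTerm Q y n) - 1 = ∑' n, eulerTerm Q y (n+1) := by
    rw [Summable.tsum_eq_zero_add hsum, eulerTerm_zero]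
    ring
  rw [heq]
  calc ‖∑' n, eulerTerm Q y (n+1)‖ ≤ ∑' n, ‖eulerTerm Q y (n+1)‖ := norm_tsum_le_tsum_norm hsn
    _ ≤ ∑' n : ℕ, c * (1/2:ℝ)^n := Summable.tsum_le_tsum hbound hsn hsb
    _ = c * (1 - 1/2)⁻¹ := by rw [tsum_mul_left, tsum_geometric_of_lt_one (by norm_num) (by norm_num)]
    _ = ‖y‖ * (2 / (1 - ‖Q‖)) := by
        rw [hc]
        field_simp
        ring

lemma eulerF_tendsto_one {Q : ℂ} (hQ : ‖Q‖ < 1) (x : ℂ) :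
    Tendsto (fun N : ℕ => ∑' n, eulerTerm Q (Q ^ N * x) n) atTop (𝓝 1) := by
  have hQ0 : (0:ℝ) < 1 - ‖Q‖ := by linarith
  have htn : Tendsto (fun N : ℕ => ‖x‖ * ‖Q‖ ^ N) atTop (𝓝 0) := by
    simpa using (tendsto_pow_atTop_nhds_zero_of_lt_one (norm_nonneg Q) hQ).const_mul ‖x‖
  have hzero : Tendsto (fun N : ℕ => (∑' n, eulerTerm Q (Q ^ N * x) n) - 1) atTop (𝓝 0) := by
    refine squeeze_zero_norm' ?_ (a := fun N => (‖x‖ * ‖Q‖ ^ N) * (2 / (1 - ‖Q‖))) ?_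
    · filter_upwards [htn.eventually_lt_const (by linarith : (0:ℝ) < (1 - ‖Q‖)/2)] with N hN
      have hy : ‖Q ^ N * x‖ ≤ (1 - ‖Q‖)/2 := by
        rw [norm_mul, norm_pow, mul_comm]
        linarith
      have h5 := eulerF_dist_one hQ (Q ^ N * x) hy
      rw [norm_mul, norm_pow] at h5
      calc ‖(∑' n, eulerTerm Q (Q ^ N * x) n) - 1‖ ≤ ‖Q‖ ^ N * ‖x‖ * (2 / (1 - ‖Q‖)) := h5
        _ = ‖x‖ * ‖Q‖ ^ N * (2 / (1 - ‖Q‖)) := by ring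
    · simpa using htn.mul_const (2 / (1 - ‖Q‖))
  have := hzero.add (tendsto_const_nhds (α := ℕ) (x := (1:ℂ)))
  simpa using this

lemma euler {Q : ℂ} (hQ : ‖Q‖ < 1) (x : ℂ) :
    ∑' n, eulerTerm Q x n = qPochInf (-x) Q := by
  have hm : Multipliable (fun j : ℕ => 1 - (-x) * Q ^ j) := multipliable_aux hQ
  have h1 : Tendsto (fun N => ∏ j ∈ Finset.range N, (1 - (-x) * Q ^ j)) atTop
      (𝓝 (qPochInf (-x) Q)) := hm.hasProd.tendsto_prod_nat
  have h3 : Tendsto (fun N => (∏ j ∈ Finset.range N, (1 - (-x) * Q ^ j)) *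
      ∑' n, eulerTerm Q (Q ^ N * x) n) atTop (𝓝 (qPochInf (-x) Q * 1)) :=
    h1.mul (eulerF_tendsto_one hQ x)
  have h4 : (fun N : ℕ => (∏ j ∈ Finset.range N, (1 - (-x) * Q ^ j)) *
      ∑' n, eulerTerm Q (Q ^ N * x) n) = fun _ => ∑' n, eulerTerm Q x n :=
    funext fun N => (eulerF_iterate hQ x N).symm
  rw [h4] at h3
  have := tendsto_nhds_unique h3 tendsto_const_nhds
  rw [mul_one] at this
  exact this.symm

lemma qPoch_mul_tail {a r : ℂ} (hr : ‖r‖ < 1) (n : ℕ) :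
    qPoch a r n * qPochInf (a * r ^ n) r = qPochInf a r := by
  have hmul : Multipliable fun j : ℕ => 1 - a * r ^ (j + n) := by
    have := multipliable_aux (a := a * r ^ n) (r := r) hr
    refine this.congr fun j => ?_
    rw [pow_add]
    ring
  have key := Multipliable.prod_mul_tprod_nat_mul' (f := fun j => 1 - a * r ^ j) (k := n) hmul
  simp only [qPoch, qPochInf]
  rw [← key]
  congr 1
  refine tprod_congr fun j => ?_
  rw [pow_add]
  ring

lemma qPochInf_even_odd {a r : ℂ} (hr : ‖r‖ < 1) :
    qPochInf a r = qPochInf a (r^2) * qPochInf (a * r) (r^2) := by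
  have hr2 : ‖r^2‖ < 1 := by
    rw [norm_pow]
    exact pow_lt_one₀ (norm_nonneg _) hr (by norm_num)
  have he : Multipliable fun k : ℕ => 1 - a * r ^ (2 * k) := by
    refine (multipliable_aux (a := a) (r := r^2) hr2).congr fun k => ?_
    rw [pow_mul]
  have ho : Multipliable fun k : ℕ => 1 - a * r ^ (2 * k + 1) := by
    refine (multipliable_aux (a := a * r) (r := r^2) hr2).congr fun k => ?_
    rw [pow_add, pow_mul, pow_one]
    ring
  have key := tprod_even_mul_odd (f := fun j => 1 - a * r ^ j) he ho
  simp only [qPochInf]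
  rw [← key]
  congr 1
  · exact tprod_congr fun k => by rw [pow_mul]
  · refine tprod_congr fun k => ?_
    rw [pow_succ, pow_mul]
    ring

lemma summable_pow_mul_pow_sq {c ρ : ℝ} (hc : 0 ≤ c) (h0 : 0 ≤ ρ) (h1 : ρ < 1) :
    Summable fun n : ℕ => c ^ n * ρ ^ (n ^ 2) := by
  refine summable_of_ratio_norm_eventually_le (r := 1/2) (by norm_num) ?_
  have ht : Tendsto (fun n : ℕ => (c * ρ) * (ρ^2) ^ n) atTop (𝓝 0) := by
    have hρ2 : ρ^2 < 1 := by nlinarith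
    simpa using (tendsto_pow_atTop_nhds_zero_of_lt_one (by positivity) hρ2).const_mul (c * ρ)
  filter_upwards [ht.eventually_lt_const (by norm_num : (0:ℝ) < 1/2)] with n hn
  have hid : c ^ (n+1) * ρ ^ ((n+1) ^ 2) = (c ^ n * ρ ^ (n ^ 2)) * ((c * ρ) * (ρ^2) ^ n) := by
    rw [show (n+1)^2 = n^2 + (2*n+1) by ring, pow_add ρ (n^2) (2*n+1), pow_succ ρ (2*n), pow_mul, pow_succ c]
    ring
  rw [Real.norm_eq_abs, Real.norm_eq_abs, hid, abs_of_nonneg (by positivity),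
    abs_of_nonneg (by positivity)]
  have hnn : (0:ℝ) ≤ (c * ρ) * (ρ^2) ^ n := by positivity
  nlinarith [pow_nonneg hc n, pow_nonneg (pow_nonneg h0 2) n, pow_nonneg h0 (n^2),
    mul_nonneg (pow_nonneg hc n) (pow_nonneg h0 (n^2))]

lemma norm_pow_pow_le {q : ℂ} (hq : ‖q‖ < 1) {k : ℕ} (hk : k ≠ 0) (j : ℕ) :
    ‖q ^ k * (q ^ k) ^ j‖ ≤ ‖q‖ := by
  rw [← pow_mul, ← pow_add, norm_pow]
  exact pow_le_of_le_one (norm_nonneg q) hq.le (by positivity)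

set_option maxHeartbeats 1000000 in
theorem stmt6 (q z ω : ℂ) (hq : ‖q‖ < 1) :
    ∑' n₁ : ℕ, ∑' n₂ : ℕ,
        z ^ n₁ * ω ^ n₂ * q ^ (n₁ ^ 2 + 2 * n₁ * n₂ + 2 * n₂ ^ 2 + 2 * n₂) *
          qPoch (-(z * q)) (q ^ 2) n₂ /
            (qPoch (q ^ 2) (q ^ 2) n₁ * qPoch (q ^ 4) (q ^ 4) n₂)
      = qPochInf (-(z * q)) (q ^ 4) * qPochInf (-(z * q ^ 3)) (q ^ 4) *
          qPochInf (-(ω * q ^ 4)) (q ^ 4) := by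
  have hq' : ‖q‖ < 1 := by exact hq
  have h0q : (0:ℝ) ≤ ‖q‖ := norm_nonneg q
  have hq2 : ‖q^2‖ < 1 := by rw [norm_pow]; exact pow_lt_one₀ h0q hq' two_ne_zero
  have hq4 : ‖q^4‖ < 1 := by rw [norm_pow]; exact pow_lt_one₀ h0q hq' (by norm_num)
  have hden0 : (0:ℝ) < 1 - ‖q‖ := by linarith
  have h2ne : ∀ n, qPoch (q^2) (q^2) n ≠ 0 := qPochQQ_ne_zero hq2
  have h4ne : ∀ n, qPoch (q^4) (q^4) n ≠ 0 := qPochQQ_ne_zero hq4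
  set A : ℝ := ‖z‖ / (1 - ‖q‖) with hA
  set B : ℝ := ‖ω‖ * (1 + ‖-(z*q)‖) / (1 - ‖q‖) with hB
  have hA0 : 0 ≤ A := div_nonneg (norm_nonneg _) hden0.le
  have hB0 : 0 ≤ B := by
    apply div_nonneg _ hden0.le
    positivity
  -- norm bound for the general term
  have hTb : ∀ n₁ n₂ : ℕ,
      ‖z ^ n₁ * ω ^ n₂ * q ^ (n₁ ^ 2 + 2 * n₁ * n₂ + 2 * n₂ ^ 2 + 2 * n₂) *
          qPoch (-(z * q)) (q ^ 2) n₂ /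
            (qPoch (q ^ 2) (q ^ 2) n₁ * qPoch (q ^ 4) (q ^ 4) n₂)‖
        ≤ (B ^ n₂ * (‖q‖^2) ^ (n₂^2)) * (A ^ n₁ * ‖q‖ ^ (n₁^2)) := by
    intro n₁ n₂
    rw [norm_div, norm_mul, norm_mul, norm_mul, norm_mul, norm_pow, norm_pow, norm_pow]
    have hqE : ‖q‖ ^ (n₁ ^ 2 + 2 * n₁ * n₂ + 2 * n₂ ^ 2 + 2 * n₂)
        ≤ ‖q‖ ^ (n₁^2) * (‖q‖^2) ^ (n₂^2) := by
      rw [← pow_mul, ← pow_add]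
      refine pow_le_pow_of_le_one h0q hq'.le ?_
      linarith [Nat.zero_le (2*n₁*n₂), Nat.zero_le (2*n₂)]
    have hP : ‖qPoch (-(z*q)) (q^2) n₂‖ ≤ (1 + ‖-(z*q)‖) ^ n₂ := norm_qPoch_le hq2.le n₂
    have hD1 : (1 - ‖q‖) ^ n₁ ≤ ‖qPoch (q^2) (q^2) n₁‖ :=
      le_norm_qPoch hq'.le (norm_pow_pow_le hq' two_ne_zero) n₁
    have hD2 : (1 - ‖q‖) ^ n₂ ≤ ‖qPoch (q^4) (q^4) n₂‖ :=
      le_norm_qPoch hq'.le (norm_pow_pow_le hq' (by norm_num)) n₂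
    have hnum : ‖z‖ ^ n₁ * ‖ω‖ ^ n₂ * ‖q‖ ^ (n₁ ^ 2 + 2 * n₁ * n₂ + 2 * n₂ ^ 2 + 2 * n₂) *
        ‖qPoch (-(z*q)) (q^2) n₂‖
        ≤ ‖z‖ ^ n₁ * ‖ω‖ ^ n₂ * (‖q‖ ^ (n₁^2) * (‖q‖^2) ^ (n₂^2)) * (1 + ‖-(z*q)‖) ^ n₂ := by
      gcongr
    have hden : (1 - ‖q‖) ^ n₁ * (1 - ‖q‖) ^ n₂ ≤
        ‖qPoch (q^2) (q^2) n₁‖ * ‖qPoch (q^4) (q^4) n₂‖ :=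
      mul_le_mul hD1 hD2 (by positivity) (norm_nonneg _)
    calc ‖z‖ ^ n₁ * ‖ω‖ ^ n₂ * ‖q‖ ^ (n₁ ^ 2 + 2 * n₁ * n₂ + 2 * n₂ ^ 2 + 2 * n₂) *
          ‖qPoch (-(z*q)) (q^2) n₂‖ / (‖qPoch (q^2) (q^2) n₁‖ * ‖qPoch (q^4) (q^4) n₂‖)
        ≤ (‖z‖ ^ n₁ * ‖ω‖ ^ n₂ * (‖q‖ ^ (n₁^2) * (‖q‖^2) ^ (n₂^2)) * (1 + ‖-(z*q)‖) ^ n₂) /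
            ((1 - ‖q‖) ^ n₁ * (1 - ‖q‖) ^ n₂) :=
          div_le_div₀ (by positivity) hnum (by positivity) hden
      _ = (B ^ n₂ * (‖q‖^2) ^ (n₂^2)) * (A ^ n₁ * ‖q‖ ^ (n₁^2)) := by
          rw [hA, hB, div_pow, div_pow, mul_pow]
          field_simp
  -- summability of the double series
  have hsummable : Summable (Function.uncurry fun n₂ n₁ : ℕ =>
      z ^ n₁ * ω ^ n₂ * q ^ (n₁ ^ 2 + 2 * n₁ * n₂ + 2 * n₂ ^ 2 + 2 * n₂) *
        qPoch (-(z * q)) (q ^ 2) n₂ /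
          (qPoch (q ^ 2) (q ^ 2) n₁ * qPoch (q ^ 4) (q ^ 4) n₂)) := by
    apply Summable.of_norm
    refine Summable.of_nonneg_of_le (fun p => norm_nonneg _) (fun p => hTb p.2 p.1) ?_
    exact Summable.mul_of_nonneg
      (summable_pow_mul_pow_sq hB0 (by positivity) (by rw [← norm_pow]; exact hq2))
      (summable_pow_mul_pow_sq hA0 h0q hq')
      (fun n => by positivity) (fun n => by positivity)
  -- pointwise inner identity
  have hpt : ∀ n₂ n₁ : ℕ,
      z ^ n₁ * ω ^ n₂ * q ^ (n₁ ^ 2 + 2 * n₁ * n₂ + 2 * n₂ ^ 2 + 2 * n₂) *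
          qPoch (-(z * q)) (q ^ 2) n₂ /
            (qPoch (q ^ 2) (q ^ 2) n₁ * qPoch (q ^ 4) (q ^ 4) n₂)
        = (ω ^ n₂ * q ^ (2*n₂^2+2*n₂) * qPoch (-(z*q)) (q^2) n₂ / qPoch (q^4) (q^4) n₂) *
            eulerTerm (q^2) (z * q^(2*n₂+1)) n₁ := by
    intro n₂ n₁
    have hE : n₁ ^ 2 + 2 * n₁ * n₂ + 2 * n₂ ^ 2 + 2 * n₂
        = (2*n₂^2+2*n₂) + ((2*n₂+1)*n₁ + 2*(n₁.choose 2)) := by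
      have h := sq_eq_choose n₁
      rw [h]
      ring
    rw [eulerTerm, hE]
    field_simp
    ring
  calc ∑' n₁ : ℕ, ∑' n₂ : ℕ,
        z ^ n₁ * ω ^ n₂ * q ^ (n₁ ^ 2 + 2 * n₁ * n₂ + 2 * n₂ ^ 2 + 2 * n₂) *
          qPoch (-(z * q)) (q ^ 2) n₂ /
            (qPoch (q ^ 2) (q ^ 2) n₁ * qPoch (q ^ 4) (q ^ 4) n₂)
      = ∑' n₂ : ℕ, ∑' n₁ : ℕ,
        z ^ n₁ * ω ^ n₂ * q ^ (n₁ ^ 2 + 2 * n₁ * n₂ + 2 * n₂ ^ 2 + 2 * n₂) *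
          qPoch (-(z * q)) (q ^ 2) n₂ /
            (qPoch (q ^ 2) (q ^ 2) n₁ * qPoch (q ^ 4) (q ^ 4) n₂) :=
          Summable.tsum_comm (f := fun n₂ n₁ : ℕ =>
            z ^ n₁ * ω ^ n₂ * q ^ (n₁ ^ 2 + 2 * n₁ * n₂ + 2 * n₂ ^ 2 + 2 * n₂) *
              qPoch (-(z * q)) (q ^ 2) n₂ /
                (qPoch (q ^ 2) (q ^ 2) n₁ * qPoch (q ^ 4) (q ^ 4) n₂)) hsummable
    _ = ∑' n₂ : ℕ, (ω ^ n₂ * q ^ (2*n₂^2+2*n₂) * qPoch (-(z*q)) (q^2) n₂ / qPoch (q^4) (q^4) n₂) *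
          qPochInf (-(z * q^(2*n₂+1))) (q^2) := by
        refine tsum_congr fun n₂ => ?_
        rw [tsum_congr (hpt n₂), tsum_mul_left, euler hq2]
    _ = ∑' n₂ : ℕ, qPochInf (-(z*q)) (q^2) * eulerTerm (q^4) (ω * q^4) n₂ := by
        refine tsum_congr fun n₂ => ?_
        have htail := qPoch_mul_tail (a := -(z*q)) (r := q^2) hq2 n₂
        have harg : (-(z*q)) * (q^2)^n₂ = -(z * q^(2*n₂+1)) := by
          rw [← pow_mul]
          ring
        rw [harg] at htail
        have hE2 : 2*n₂^2+2*n₂ = 4*n₂ + 4*(n₂.choose 2) := by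
          have h := sq_eq_choose n₂
          rw [h]
          ring
        rw [eulerTerm, hE2, ← htail]
        field_simp
        ring
    _ = qPochInf (-(z*q)) (q^2) * qPochInf (-(ω * q^4)) (q^4) := by
        rw [tsum_mul_left, euler hq4]
    _ = qPochInf (-(z * q)) (q ^ 4) * qPochInf (-(z * q ^ 3)) (q ^ 4) *
          qPochInf (-(ω * q ^ 4)) (q ^ 4) := by
        have hsplit := qPochInf_even_odd (a := -(z*q)) (r := q^2) hq2
        rw [show ((q^2)^2 : ℂ) = q^4 by ring, show -(z*q)*q^2 = -(z*q^3) by ring] at hsplit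
        rw [hsplit, mul_assoc]
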